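/- Let n ≥ n', let A be a real symmetric n×n matrix, A' a real symmetric n'×n' matrix, K a real n×n' matrix, λ ≥ 0, α ∈ [0,1], and ε > 0 with ‖A‖₂·‖A'‖₂ < ε. Then the FastPFP iteration map T(X) = (1−α)X + α·P_d(A X A' + λK) is Lipschitz continuous with Lipschitz constant 1−α+αε with respect to the Frobenius norm; moreover, if α > 0 and ε < 1, then T has a unique fixed point X* and the iterates Tᵗ(X⁽⁰⁾) converge to X* for every initial matrix X⁽⁰⁾. -/

import Mathlib

/-!
The map `X ↦ A X A' + λK` is Lipschitz with constant `‖A‖₂‖A'‖₂ < ε` in the Frobenius norm, since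
`‖A X‖_F ≤ ‖A‖₂‖X‖_F` column by column and `‖X B‖_F = ‖Bᵀ Xᵀ‖_F`. Identifying matrices with
Euclidean space isometrically, `P_d` is the metric projection onto a convex set, hence
nonexpansive by the variational inequality `⟪u - P u, w - P u⟫ ≤ 0`. A relaxation
`(1 - α)X + αG(X)` of an `L`-Lipschitz `G` is `(1 - α + αL)`-Lipschitz, and for `α > 0`, `ε < 1`
this constant is below `1`, so Banach's fixed point theorem applies.
-/

/-- The Frobenius norm of a real matrix. -/
noncomputable def frobNorm {m p : Type*} [Fintype m] [Fintype p] (A : Matrix m p ℝ) : ℝ :=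
  Real.sqrt (∑ i, ∑ j, (A i j) ^ 2)

/-- The spectral (ℓ₂ operator) norm of a real square matrix. -/
noncomputable def specNorm {m : Type*} [Fintype m] [DecidableEq m] (A : Matrix m m ℝ) : ℝ :=
  ‖Matrix.toEuclideanCLM (𝕜 := ℝ) A‖

/-- `Omega n n'` is the set of partial doubly stochastic matrices: real `n × n'` matrices
with row sums at most 1, column sums equal to 1, and nonnegative entries. -/
def Omega (n n' : ℕ) : Set (Matrix (Fin n) (Fin n') ℝ) :=
  {X | (∀ i, ∑ j, X i j ≤ 1) ∧ (∀ j, ∑ i, X i j = 1) ∧ (∀ i j, 0 ≤ X i j)}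

open Matrix Filter Topology
open scoped RealInnerProductSpace

section MetricProjection

variable {F : Type*} [NormedAddCommGroup F] [InnerProductSpace ℝ F] {K : Set F}

theorem real_inner_sub_le_zero_of_forall_norm_sub_le (hK : Convex ℝ K) {u v w : F} (hv : v ∈ K)
    (h : ∀ w ∈ K, ‖u - v‖ ≤ ‖u - w‖) (hw : w ∈ K) : ⟪u - v, w - v⟫ ≤ 0 := by
  have : Nonempty K := ⟨⟨v, hv⟩⟩
  refine (norm_eq_iInf_iff_real_inner_le_zero hK hv).1 ?_ w hw
  exact le_antisymm (le_ciInf fun w => h w w.2)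
    (ciInf_le ⟨0, Set.forall_mem_range.2 fun _ => norm_nonneg _⟩ (⟨v, hv⟩ : K))

theorem norm_sub_le_of_forall_norm_sub_le (hK : Convex ℝ K) {u u' v v' : F} (hv : v ∈ K)
    (hv' : v' ∈ K) (h : ∀ w ∈ K, ‖u - v‖ ≤ ‖u - w‖) (h' : ∀ w ∈ K, ‖u' - v'‖ ≤ ‖u' - w‖) :
    ‖v - v'‖ ≤ ‖u - u'‖ := by
  have hu := real_inner_sub_le_zero_of_forall_norm_sub_le hK hv h hv'
  have hu' := real_inner_sub_le_zero_of_forall_norm_sub_le hK hv' h' hv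
  have key : ‖v - v'‖ ^ 2 ≤ ‖u - u'‖ * ‖v - v'‖ := calc
    ‖v - v'‖ ^ 2 = ⟪u - u', v - v'⟫ + ⟪u - v, v' - v⟫ + ⟪u' - v', v - v'⟫ := by
      rw [← real_inner_self_eq_norm_sq]
      simp only [inner_sub_left, inner_sub_right, real_inner_comm]
      ring
    _ ≤ ⟪u - u', v - v'⟫ := by linarith
    _ ≤ ‖u - u'‖ * ‖v - v'‖ := real_inner_le_norm _ _
  nlinarith [norm_nonneg (v - v'), norm_nonneg (u - u')]

end MetricProjection

section Frobenius

variable {m p : Type*} [Fintype m] [Fintype p]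

noncomputable def Matrix.toEuclideanSpace : Matrix m p ℝ ≃ₗ[ℝ] EuclideanSpace ℝ (m × p) :=
  (LinearEquiv.curry ℝ ℝ m p).symm.trans (WithLp.linearEquiv 2 ℝ _).symm

theorem Matrix.norm_toEuclideanSpace (X : Matrix m p ℝ) : ‖toEuclideanSpace X‖ = frobNorm X := by
  rw [EuclideanSpace.norm_eq, frobNorm, Fintype.sum_prod_type]
  simp only [Real.norm_eq_abs, sq_abs]
  rfl

theorem frobNorm_nonneg (X : Matrix m p ℝ) : 0 ≤ frobNorm X := Real.sqrt_nonneg _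

theorem frobNorm_add_le (X Y : Matrix m p ℝ) : frobNorm (X + Y) ≤ frobNorm X + frobNorm Y := by
  simpa only [← norm_toEuclideanSpace, map_add] using norm_add_le _ _

theorem frobNorm_smul (c : ℝ) (X : Matrix m p ℝ) : frobNorm (c • X) = |c| * frobNorm X := by
  rw [← norm_toEuclideanSpace, map_smul, norm_smul, Real.norm_eq_abs, norm_toEuclideanSpace]

theorem frobNorm_transpose (X : Matrix m p ℝ) : frobNorm Xᵀ = frobNorm X := by
  rw [frobNorm, frobNorm, Finset.sum_comm]
  rfl

theorem frobNorm_sq_eq_sum_norm_col (X : Matrix m p ℝ) :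
    frobNorm X ^ 2 = ∑ j, ‖WithLp.toLp 2 (Xᵀ j)‖ ^ 2 := by
  rw [frobNorm, Real.sq_sqrt (by positivity), Finset.sum_comm]
  simp [EuclideanSpace.norm_sq_eq, sq_abs]

open scoped Matrix.Norms.L2Operator in
theorem specNorm_transpose [DecidableEq m] (B : Matrix m m ℝ) : specNorm Bᵀ = specNorm B := by
  simpa [specNorm, ← cstar_norm_def, conjTranspose_eq_transpose_of_trivial] using
    l2_opNorm_conjTranspose B

theorem frobNorm_mul_le_left [DecidableEq m] (A : Matrix m m ℝ) (X : Matrix m p ℝ) :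
    frobNorm (A * X) ≤ specNorm A * frobNorm X := by
  have hcol : ∀ j, (A * X)ᵀ j = A *ᵥ Xᵀ j := fun j => by
    ext i; simp [mul_apply, mulVec, dotProduct]
  have hsq : frobNorm (A * X) ^ 2 ≤ (specNorm A * frobNorm X) ^ 2 := calc
    frobNorm (A * X) ^ 2 = ∑ j, ‖toEuclideanCLM (𝕜 := ℝ) A (WithLp.toLp 2 (Xᵀ j))‖ ^ 2 := by
      simp only [frobNorm_sq_eq_sum_norm_col, hcol, toEuclideanCLM_toLp]
    _ ≤ ∑ j, (specNorm A * ‖WithLp.toLp 2 (Xᵀ j)‖) ^ 2 := by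
      gcongr with j
      exact (toEuclideanCLM (𝕜 := ℝ) A).le_opNorm _
    _ = (specNorm A * frobNorm X) ^ 2 := by
      rw [mul_pow, frobNorm_sq_eq_sum_norm_col, Finset.mul_sum]
      simp only [mul_pow]
  exact (pow_le_pow_iff_left₀ (frobNorm_nonneg _)
    (mul_nonneg (norm_nonneg _) (frobNorm_nonneg _)) two_ne_zero).1 hsq

theorem frobNorm_mul_le_right [DecidableEq p] (X : Matrix m p ℝ) (B : Matrix p p ℝ) :
    frobNorm (X * B) ≤ specNorm B * frobNorm X := by
  simpa only [← frobNorm_transpose (X * B), transpose_mul, specNorm_transpose, frobNorm_transpose]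
    using frobNorm_mul_le_left Bᵀ Xᵀ

theorem frobNorm_mul_mul_le [DecidableEq m] [DecidableEq p] (A : Matrix m m ℝ) (X : Matrix m p ℝ)
    (B : Matrix p p ℝ) : frobNorm (A * X * B) ≤ specNorm A * specNorm B * frobNorm X := calc
  frobNorm (A * X * B) ≤ specNorm B * frobNorm (A * X) := frobNorm_mul_le_right _ _
  _ ≤ specNorm B * (specNorm A * frobNorm X) := by
    gcongr
    exacts [norm_nonneg _, frobNorm_mul_le_left _ _]
  _ = specNorm A * specNorm B * frobNorm X := by ring

theorem frobNorm_sub_le_of_forall_frobNorm_sub_le {S : Set (Matrix m p ℝ)} (hS : Convex ℝ S)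
    {P : Matrix m p ℝ → Matrix m p ℝ} (hP_mem : ∀ Y, P Y ∈ S)
    (hP_min : ∀ Y, ∀ D ∈ S, frobNorm (Y - P Y) ≤ frobNorm (Y - D)) (Y Z : Matrix m p ℝ) :
    frobNorm (P Y - P Z) ≤ frobNorm (Y - Z) := by
  have hmin : ∀ Y, ∀ w ∈ toEuclideanSpace '' S,
      ‖toEuclideanSpace Y - toEuclideanSpace (P Y)‖ ≤ ‖toEuclideanSpace Y - w‖ := by
    rintro Y _ ⟨D, hD, rfl⟩
    simpa only [← map_sub, norm_toEuclideanSpace] using hP_min Y D hD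
  have hK : Convex ℝ (toEuclideanSpace '' S) := hS.linear_image toEuclideanSpace.toLinearMap
  simpa only [← map_sub, norm_toEuclideanSpace] using
    norm_sub_le_of_forall_norm_sub_le hK
      (Set.mem_image_of_mem _ (hP_mem Y)) (Set.mem_image_of_mem _ (hP_mem Z)) (hmin Y) (hmin Z)

theorem frobNorm_relaxation_sub_le {G : Matrix m p ℝ → Matrix m p ℝ} {L α : ℝ}
    (hG : ∀ X Y, frobNorm (G X - G Y) ≤ L * frobNorm (X - Y)) (hα : α ∈ Set.Icc (0 : ℝ) 1)
    (X Y : Matrix m p ℝ) :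
    frobNorm (((1 - α) • X + α • G X) - ((1 - α) • Y + α • G Y))
      ≤ (1 - α + α * L) * frobNorm (X - Y) := calc
  _ = frobNorm ((1 - α) • (X - Y) + α • (G X - G Y)) := by congr 1; module
  _ ≤ (1 - α) * frobNorm (X - Y) + α * frobNorm (G X - G Y) := by
    refine (frobNorm_add_le _ _).trans_eq ?_
    rw [frobNorm_smul, frobNorm_smul, abs_of_nonneg (sub_nonneg.2 hα.2), abs_of_nonneg hα.1]
  _ ≤ (1 - α) * frobNorm (X - Y) + α * (L * frobNorm (X - Y)) := by gcongr; exacts [hα.1, hG X Y]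
  _ = (1 - α + α * L) * frobNorm (X - Y) := by ring

theorem exists_fixedPoint_of_frobNorm_contraction {f : Matrix m p ℝ → Matrix m p ℝ} {k : ℝ}
    (hk0 : 0 ≤ k) (hk1 : k < 1) (hf : ∀ X Y, frobNorm (f X - f Y) ≤ k * frobNorm (X - Y)) :
    ∃ Xstar, f Xstar = Xstar ∧ (∀ Y, f Y = Y → Y = Xstar) ∧
      ∀ X0, Tendsto (fun t => frobNorm (f^[t] X0 - Xstar)) atTop (𝓝 0) := by
  set e := (toEuclideanSpace : Matrix m p ℝ ≃ₗ[ℝ] EuclideanSpace ℝ (m × p))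
  set g := e ∘ f ∘ e.symm
  have hdist : ∀ x y, dist x y = frobNorm (e.symm x - e.symm y) := fun x y => by
    rw [dist_eq_norm, ← norm_toEuclideanSpace, map_sub, e.apply_symm_apply, e.apply_symm_apply]
  have hg : ContractingWith k.toNNReal g := by
    refine ⟨Real.toNNReal_lt_one.2 hk1, LipschitzWith.of_dist_le_mul fun x y => ?_⟩
    rw [hdist, hdist, Real.coe_toNNReal k hk0]
    simpa only [g, Function.comp_apply, e.symm_apply_apply] using hf (e.symm x) (e.symm y)
  have hsemiconj : Function.Semiconj e f g := fun X => by simp [g]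
  have : Nonempty (EuclideanSpace ℝ (m × p)) := ⟨0⟩
  refine ⟨e.symm (ContractingWith.fixedPoint g hg), ?_, fun Y hY => ?_, fun X0 => ?_⟩
  · exact e.eq_symm_apply.2 hg.fixedPoint_isFixedPt
  · exact e.eq_symm_apply.2 (hg.fixedPoint_unique (show g (e Y) = e Y by simp [g, hY]))
  · refine (tendsto_iff_dist_tendsto_zero.1 (hg.tendsto_iterate_fixedPoint (e X0))).congr
      fun t => ?_
    rw [← hsemiconj.iterate_right, hdist, e.symm_apply_apply]

end Frobenius

theorem convex_Omega (n n' : ℕ) : Convex ℝ (Omega n n') := by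
  rintro X ⟨hX_row, hX_col, hX_nonneg⟩ Y ⟨hY_row, hY_col, hY_nonneg⟩ a b ha hb hab
  refine ⟨fun i => ?_, fun j => ?_, fun i j => ?_⟩ <;>
    simp only [Matrix.add_apply, Matrix.smul_apply, smul_eq_mul, Finset.sum_add_distrib,
      ← Finset.mul_sum]
  · nlinarith [hX_row i, hY_row i]
  · rw [hX_col j, hY_col j, mul_one, mul_one, hab]
  · have := hX_nonneg i j; have := hY_nonneg i j; positivity

theorem fastPFP_map_lipschitz_and_fixedPoint_general (n n' : ℕ)
    (A : Matrix (Fin n) (Fin n) ℝ)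
    (A' : Matrix (Fin n') (Fin n') ℝ)
    (K : Matrix (Fin n) (Fin n') ℝ) (lam : ℝ)
    (α : ℝ) (hα : α ∈ Set.Icc (0 : ℝ) 1) (ε : ℝ) (hε : 0 < ε)
    (hspec : specNorm A * specNorm A' < ε)
    (Pd : Matrix (Fin n) (Fin n') ℝ → Matrix (Fin n) (Fin n') ℝ)
    (hPd_mem : ∀ Y, Pd Y ∈ Omega n n')
    (hPd_min : ∀ Y, ∀ D ∈ Omega n n', frobNorm (Y - Pd Y) ≤ frobNorm (Y - D))
    (T : Matrix (Fin n) (Fin n') ℝ → Matrix (Fin n) (Fin n') ℝ)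
    (hT : ∀ Xm, T Xm = (1 - α) • Xm + α • Pd (A * Xm * A' + lam • K)) :
    (∀ X Y : Matrix (Fin n) (Fin n') ℝ,
        frobNorm (T X - T Y) ≤ (1 - α + α * ε) * frobNorm (X - Y)) ∧
      (0 < α → ε < 1 →
        ∃ Xstar : Matrix (Fin n) (Fin n') ℝ,
          T Xstar = Xstar ∧ (∀ Y, T Y = Y → Y = Xstar) ∧
            ∀ X0 : Matrix (Fin n) (Fin n') ℝ,
              Filter.Tendsto (fun t => frobNorm (T^[t] X0 - Xstar)) Filter.atTop (nhds 0)) := by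
  have hPd_lip := frobNorm_sub_le_of_forall_frobNorm_sub_le (convex_Omega n n') hPd_mem hPd_min
  have hG_lip : ∀ X Y : Matrix (Fin n) (Fin n') ℝ,
      frobNorm (Pd (A * X * A' + lam • K) - Pd (A * Y * A' + lam • K)) ≤ ε * frobNorm (X - Y) :=
    fun X Y => calc
    _ ≤ frobNorm (A * (X - Y) * A') := by
      simpa only [add_sub_add_right_eq_sub, Matrix.mul_sub, Matrix.sub_mul] using
        hPd_lip (A * X * A' + lam • K) (A * Y * A' + lam • K)
    _ ≤ specNorm A * specNorm A' * frobNorm (X - Y) := frobNorm_mul_mul_le _ _ _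
    _ ≤ ε * frobNorm (X - Y) := by gcongr; exact frobNorm_nonneg _
  have hT_lip : ∀ X Y : Matrix (Fin n) (Fin n') ℝ,
      frobNorm (T X - T Y) ≤ (1 - α + α * ε) * frobNorm (X - Y) := fun X Y => by
    simpa only [← hT] using frobNorm_relaxation_sub_le hG_lip hα X Y
  refine ⟨hT_lip, fun hα_pos hε_lt => exists_fixedPoint_of_frobNorm_contraction ?_ ?_ hT_lip⟩
  · linarith [hα.2, mul_nonneg hα.1 hε.le]
  · linarith [mul_lt_mul_of_pos_left hε_lt hα_pos, mul_one α]

/-- The FastPFP iteration map `T(X) = (1−α)X + α·P_d(A X A' + λK)` is Lipschitz with constant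
`1−α+αε` in the Frobenius norm; moreover, if `α > 0` and `ε < 1`, then `T` has a unique fixed
point `X*` and the iterates `Tᵗ(X⁽⁰⁾)` converge to `X*` for every initial matrix `X⁽⁰⁾`. -/
theorem fastPFP_map_lipschitz_and_fixedPoint (n n' : ℕ) (hn' : 0 < n') (hnn : n' ≤ n)
    (A : Matrix (Fin n) (Fin n) ℝ) (hA : A.IsSymm)
    (A' : Matrix (Fin n') (Fin n') ℝ) (hA' : A'.IsSymm)
    (K : Matrix (Fin n) (Fin n') ℝ) (lam : ℝ) (hlam : 0 ≤ lam)
    (α : ℝ) (hα : α ∈ Set.Icc (0 : ℝ) 1) (ε : ℝ) (hε : 0 < ε)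
    (hspec : specNorm A * specNorm A' < ε)
    (Pd : Matrix (Fin n) (Fin n') ℝ → Matrix (Fin n) (Fin n') ℝ)
    (hPd_mem : ∀ Y, Pd Y ∈ Omega n n')
    (hPd_min : ∀ Y, ∀ D ∈ Omega n n', frobNorm (Y - Pd Y) ≤ frobNorm (Y - D))
    (T : Matrix (Fin n) (Fin n') ℝ → Matrix (Fin n) (Fin n') ℝ)
    (hT : ∀ Xm, T Xm = (1 - α) • Xm + α • Pd (A * Xm * A' + lam • K)) :
    (∀ X Y : Matrix (Fin n) (Fin n') ℝ,
        frobNorm (T X - T Y) ≤ (1 - α + α * ε) * frobNorm (X - Y)) ∧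
      (0 < α → ε < 1 →
        ∃ Xstar : Matrix (Fin n) (Fin n') ℝ,
          T Xstar = Xstar ∧ (∀ Y, T Y = Y → Y = Xstar) ∧
            ∀ X0 : Matrix (Fin n) (Fin n') ℝ,
              Filter.Tendsto (fun t => frobNorm (T^[t] X0 - Xstar)) Filter.atTop (nhds 0)) :=
  fastPFP_map_lipschitz_and_fixedPoint_general n n' A A' K lam α hα ε hε hspec Pd hPd_mem hPd_min T
    hT
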